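/- There exists β_i ∈ Z_p ∖ {0, 1, …, Δ+1, α_{i−1}} such that: for each e_j ∈ M_2, (e_j − β_i) divides J(e_j) but (e_j − β_i)² does not divide J(e_j); for each e_j ∈ M_2, (e_j − β_i) divides G' but (e_j − β_i)² does not divide G'; and (e_i − β_i) divides neither J(e_i) nor G'. -/

import Mathlib

/-!
For `j ∈ M₂` the hypothesis `H'_{e_j} = 0` says that `G` vanishes at every point with
`e_j ≠ α`. Hence every `b ≠ α` is a root of `G'` (as a polynomial in `e_j`) and of `J(e_j)`.
Since `G'` has degree at most `p - 1` in `e_j`, these `p - 1` roots are all simple. `J(e_j)` has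
degree at most `deg_{e_j} G ≤ p + m + i`, so at most `m + 1 + i` of them are multiple. In `e_i`,
both `G'` and `J(e_i)` have degree at most `2 + i`: `C^{P'}` has degree at most `2` in each edge
variable (an edge has two endpoints) and each `E^k`, `k < i`, has degree at most `1` in `e_i`.
Altogether at most `Δ + 3 + 2(2 + i) + |M₂|(m + 1 + i) < p` values are excluded, which leaves a
valid `β`.
-/

open MvPolynomial
open scoped Classical

noncomputable section

/-- Exponent reduction implementing Fermat's relation `x^p ≡ x`:
`0 ↦ 0` and `k ↦ ((k-1) mod (p-1)) + 1` for `k ≥ 1`. -/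
def fermatExp (p k : ℕ) : ℕ := if k = 0 then 0 else (k - 1) % (p - 1) + 1

lemma fermatExp_zero (p : ℕ) : fermatExp p 0 = 0 := by simp [fermatExp]

/-- The Fermat reduction `F'` of a multivariate polynomial over `Z_p`: every exponent is
reduced using `x^p ≡ x`, so that the result has degree `≤ p-1` in each variable. -/
def fermatReduce {σ : Type*} (p : ℕ) (F : MvPolynomial σ (ZMod p)) : MvPolynomial σ (ZMod p) :=
  F.support.sum fun d => monomial (d.mapRange (fermatExp p) (fermatExp_zero p)) (F.coeff d)

/-- Univariate Fermat reduction. -/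
def fermatReduceUni (p : ℕ) (f : Polynomial (ZMod p)) : Polynomial (ZMod p) :=
  f.support.sum fun k => Polynomial.monomial (fermatExp p k) (f.coeff k)

/-- `N_e(v_i)`: the edges incident to the vertex `i`. -/
def incidentE {n m : ℕ} (ed : Fin m → Sym2 (Fin n)) (i : Fin n) : Finset (Fin m) :=
  Finset.univ.filter fun k => i ∈ ed k

/-- `N_i(v_i)`: the neighbours of `v_i` other than `v_1, …, v_{i-1}`. -/
def laterNbrs {n m : ℕ} (ed : Fin m → Sym2 (Fin n)) (i : Fin n) : Finset (Fin n) :=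
  Finset.univ.filter fun j => (∃ k, ed k = s(i, j)) ∧ ¬ j < i

/-- `N_i(e_i)`: the edges sharing an endpoint with `e_i`, other than `e_1, …, e_{i-1}`. -/
def laterAdjE {n m : ℕ} (ed : Fin m → Sym2 (Fin n)) (k : Fin m) : Finset (Fin m) :=
  Finset.univ.filter fun l => (l ≠ k ∧ ∃ x, x ∈ ed k ∧ x ∈ ed l) ∧ ¬ l < k

/-- The polynomial `P` (vertex variables are `Sum.inl`, edge variables are `Sum.inr`). -/
def Ppoly (n m Δ p : ℕ) (ed : Fin m → Sym2 (Fin n)) : MvPolynomial (Fin n ⊕ Fin m) (ZMod p) :=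
  ∏ i : Fin n,
    ((∏ j ∈ laterNbrs ed i, (X (Sum.inl i) - X (Sum.inl j))) *
      (∏ k ∈ incidentE ed i, (X (Sum.inl i) - X (Sum.inr k))) *
      (∏ l ∈ Finset.Icc (Δ + 2) p, (X (Sum.inl i) - C (l : ZMod p))))

/-- The coefficient of the vertex-monomial `∏ v_j ^ (d j)` of `F`, as a polynomial in the
edge variables. -/
def vCoeff {n m p : ℕ} (F : MvPolynomial (Fin n ⊕ Fin m) (ZMod p)) (d : Fin n →₀ ℕ) :
    MvPolynomial (Fin m) (ZMod p) :=
  ((sumAlgEquiv (ZMod p) (Fin n) (Fin m)) F).coeff d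

/-- The colour set `K = {1, …, Δ+1} ∪ {α} ⊆ Z_p`. -/
def colorSet (Δ p : ℕ) (α : ZMod p) : Finset (ZMod p) :=
  insert α ((Finset.Icc 1 (Δ + 1)).image fun l : ℕ => (l : ZMod p))

/-- The polynomial `E^k`. -/
def Epoly {n m : ℕ} (Δ p : ℕ) [NeZero p] (ed : Fin m → Sym2 (Fin n)) (α : ZMod p) (k : Fin m) :
    MvPolynomial (Fin m) (ZMod p) :=
  (∏ l ∈ laterAdjE ed k, (X k - X l)) *
    (∏ c ∈ Finset.univ \ colorSet Δ p α, (X k - C c))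

/-- `Q_i = C^{P'} · E^1 ⋯ E^i`; here `i` is the number of edge factors, so `Qpoly … i`
is the paper's `Q_i` (and `Qpoly … 0 = C^{P'}`). -/
def Qpoly {n m : ℕ} (Δ p : ℕ) [NeZero p] (ed : Fin m → Sym2 (Fin n)) (α : ZMod p)
    (CP : MvPolynomial (Fin m) (ZMod p)) (i : ℕ) : MvPolynomial (Fin m) (ZMod p) :=
  CP * ∏ k ∈ Finset.univ.filter (fun k : Fin m => (k : ℕ) < i), Epoly Δ p ed α k

/-- Fermat reduction in all variables except the variable `j`. -/
def fermatReduceExcept {m : ℕ} (p : ℕ) (j : Fin m) (F : MvPolynomial (Fin m) (ZMod p)) :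
    MvPolynomial (Fin m) (ZMod p) :=
  F.support.sum fun d =>
    monomial (Finsupp.filter (fun k => k = j) d +
      Finsupp.mapRange (fermatExp p) (fermatExp_zero p) (Finsupp.filter (fun k => k ≠ j) d))
      (F.coeff d)

/-- Given an exponent vector `d0` for the variables other than `j`, the coefficient in `F` of the
monomial `∏_{k ≠ j} X_k ^ (d0 k)`, as a univariate polynomial in the variable `j`. -/
def coeffAt {m p : ℕ} (j : Fin m) (d0 : Fin m →₀ ℕ) (F : MvPolynomial (Fin m) (ZMod p)) :
    Polynomial (ZMod p) :=
  (F.support.filter fun d => ∀ k, k ≠ j → d k = d0 k).sum fun d =>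
    Polynomial.monomial (d j) (F.coeff d)

namespace Polynomial

variable {R ι : Type*} [CommRing R] [IsDomain R]

lemma sum_count_roots_le_natDegree (f : R[X]) {c : ι → R} (hc : Function.Injective c)
    (T : Finset ι) : ∑ t ∈ T, f.roots.count (c t) ≤ f.natDegree :=
  calc ∑ t ∈ T, f.roots.count (c t) = ∑ r ∈ T.image c, f.roots.count r :=
        (Finset.sum_image (f := fun r => f.roots.count r) hc.injOn).symm
    _ ≤ ∑ r ∈ T.image c ∪ f.roots.toFinset, f.roots.count r :=
        Finset.sum_le_sum_of_subset Finset.subset_union_left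
    _ = Multiset.card f.roots :=
        Multiset.sum_count_eq_card fun _ hr =>
          Finset.mem_union_right _ (Multiset.mem_toFinset.mpr hr)
    _ ≤ f.natDegree := card_roots' f

lemma card_add_card_le_natDegree {f : R[X]} (hf : f ≠ 0) {c : ι → R}
    (hc : Function.Injective c) {S T : Finset ι} (hST : S ⊆ T)
    (hT : ∀ t ∈ T, X - C (c t) ∣ f) (hS : ∀ t ∈ S, (X - C (c t)) ^ 2 ∣ f) :
    T.card + S.card ≤ f.natDegree := by
  calc T.card + S.card = ∑ t ∈ T, (1 + if t ∈ S then 1 else 0) := by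
        rw [Finset.sum_add_distrib, Finset.card_eq_sum_ones, Finset.sum_boole, Nat.cast_id,
          Finset.filter_mem_eq_inter, Finset.inter_eq_right.mpr hST]
    _ ≤ ∑ t ∈ T, f.roots.count (c t) := Finset.sum_le_sum fun t ht => by
        rw [count_roots, le_rootMultiplicity_iff hf]
        split_ifs with htS
        · exact hS t htS
        · simpa using hT t ht
    _ ≤ f.natDegree := sum_count_roots_le_natDegree f hc T

lemma card_filter_X_sub_C_dvd_le_natDegree [Fintype R] {f : R[X]} (hf : f ≠ 0) :
    (Finset.univ.filter fun b => X - C b ∣ f).card ≤ f.natDegree := by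
  simpa using card_add_card_le_natDegree hf Function.injective_id
    (Finset.empty_subset _) (fun t ht => (Finset.mem_filter.mp ht).2) (by simp)

end Polynomial

universe u

namespace MvPolynomial

section Semiring

variable {σ R : Type*} [CommSemiring R]

lemma exists_eq_of_mem_support_sum_monomial {ι : Type*} {s : Finset ι} {g : ι → σ →₀ ℕ}
    {c : ι → R} {d : σ →₀ ℕ} (hd : d ∈ (∑ t ∈ s, monomial (g t) (c t)).support) :
    ∃ t ∈ s, d = g t := by
  obtain ⟨t, ht, hd⟩ := Finset.mem_biUnion.mp (support_sum hd)
  exact ⟨t, ht, Finset.mem_singleton.mp (support_monomial_subset hd)⟩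

lemma eval_sum_monomial_eq_eval [Fintype σ] (x : σ → R) (F : MvPolynomial σ R)
    (g : (σ →₀ ℕ) → σ →₀ ℕ) (hg : ∀ d k, x k ^ g d k = x k ^ d k) :
    eval x (∑ d ∈ F.support, monomial (g d) (F.coeff d)) = eval x F := by
  conv_rhs => rw [F.as_sum]
  simp only [map_sum, eval_monomial, Finsupp.prod_fintype _ _ (fun _ => pow_zero _), hg]

lemma coeff_coeff_sumAlgEquiv {R S₁ S₂ : Type*} [CommSemiring R]
    (F : MvPolynomial (S₁ ⊕ S₂) R) (d : S₁ →₀ ℕ) (e : S₂ →₀ ℕ) :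
    ((sumAlgEquiv R S₁ S₂ F).coeff d).coeff e = F.coeff (d.sumElim e) := by
  simp only [coeff, sumAlgEquiv, AddMonoidAlgebra.curryAlgEquiv, AddMonoidAlgebra.curryRingEquiv,
    AddMonoidAlgebra.curryAddEquiv, AddEquiv.toEquiv_eq_coe, RingEquiv.toEquiv_eq_coe,
    AlgEquiv.trans_apply, AlgEquiv.coe_mk, EquivLike.coe_coe, RingEquiv.coe_mk,
    AddEquiv.trans_apply, AddMonoidAlgebra.coeffAddEquiv_apply, Finsupp.coe_curryAddEquiv,
    Finsupp.mapRange.addEquiv_apply, AddMonoidAlgebra.coeffAddEquiv_symm_apply,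
    Finsupp.mapRange_apply, Finsupp.curry_apply, AddMonoidAlgebra.coeff_domCongr,
    Finsupp.sumFinsuppAddEquivProdFinsupp_symm_apply]

end Semiring

section SubstVar

variable {σ R : Type*} [CommRing R]

def substVar (j : σ) (b : R) : MvPolynomial σ R →ₐ[R] MvPolynomial σ R :=
  aeval (Function.update X j (C b))

lemma eval_substVar (j : σ) (b : R) (x : σ → R) (F : MvPolynomial σ R) :
    eval x (substVar j b F) = eval (Function.update x j b) F := by
  rw [substVar, aeval_eq_bind₁, eval, eval₂Hom_bind₁]
  congr 2
  funext k
  rcases eq_or_ne k j with rfl | hk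
  · simp
  · simp [hk]

lemma substVar_monomial (j : σ) (b : R) (d : σ →₀ ℕ) (c : R) :
    substVar j b (monomial d c) = monomial (d.erase j) (c * b ^ d j) := by
  rw [substVar, aeval_monomial,
    ← Finsupp.mul_prod_erase' d j
      (fun k e => Function.update (X : σ → MvPolynomial σ R) j (C b) k ^ e) fun _ => pow_zero _,
    Function.update_self, ← C_pow, algebraMap_eq, monomial_eq, C_mul, mul_assoc]
  congr 2
  refine Finsupp.prod_congr fun k hk => ?_
  rw [Function.update_of_ne (by rintro rfl; simp at hk)]

lemma substVar_eq_sum (j : σ) (b : R) (F : MvPolynomial σ R) :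
    substVar j b F = ∑ d ∈ F.support, monomial (d.erase j) (F.coeff d * b ^ d j) := by
  conv_lhs => rw [F.as_sum, map_sum]
  simp only [substVar_monomial]

lemma substVar_mem_restrictDegree {j : σ} {b : R} {F : MvPolynomial σ R} {n : ℕ}
    (hF : ∀ d ∈ F.support, ∀ k ≠ j, d k ≤ n) :
    substVar j b F ∈ restrictDegree σ R n := by
  refine (mem_restrictDegree _ _ _).mpr fun s hs k => ?_
  rw [substVar_eq_sum] at hs
  obtain ⟨d, hd, rfl⟩ := exists_eq_of_mem_support_sum_monomial hs
  rcases eq_or_ne k j with rfl | hk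
  · simp
  · exact (Finsupp.erase_ne hk).trans_le (hF d hd k hk)

lemma X_sub_C_dvd_sub_substVar (j : σ) (b : R) (F : MvPolynomial σ R) :
    X j - C b ∣ F - substVar j b F := by
  nth_rewrite 1 [F.as_sum]
  rw [substVar_eq_sum, ← Finset.sum_sub_distrib]
  refine Finset.dvd_sum fun d _ => ?_
  have : monomial d (F.coeff d) - monomial (d.erase j) (F.coeff d * b ^ d j) =
      monomial (d.erase j) (F.coeff d) * (X j ^ d j - C b ^ d j) := by
    rw [mul_sub, X_pow_eq_monomial, monomial_mul, mul_one, Finsupp.erase_add_single, ← C_pow,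
      mul_comm (monomial _ _) (C _), C_mul_monomial, mul_comm (b ^ d j)]
  rw [this]
  exact (sub_dvd_pow_sub_pow _ _ _).mul_left _

lemma X_sub_C_dvd_iff_substVar_eq_zero (j : σ) (b : R) (F : MvPolynomial σ R) :
    X j - C b ∣ F ↔ substVar j b F = 0 := by
  constructor
  · rintro ⟨q, rfl⟩
    simp [substVar]
  · intro h
    simpa [h] using X_sub_C_dvd_sub_substVar j b F

lemma substVar_eq_zero_of_eval_eq_zero {τ K : Type u} [Field K] [Fintype K] [Finite τ] {j : τ}
    {b : K} {F : MvPolynomial τ K}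
    (hdeg : ∀ d ∈ F.support, ∀ k ≠ j, d k ≤ Fintype.card K - 1)
    (hF : ∀ x, x j = b → eval x F = 0) : substVar j b F = 0 :=
  eq_zero_of_eval_eq_zero τ K _
    (fun x => (eval_substVar j b x F).trans (hF _ (Function.update_self ..)))
    (substVar_mem_restrictDegree hdeg)

end SubstVar

section DegreeOf

variable {σ R : Type*} [CommRing R] [Nontrivial R]

lemma degreeOf_X_sub_le (j k : σ) (q : MvPolynomial σ R) :
    degreeOf j (X k - q) ≤ (if j = k then 1 else 0) + degreeOf j q :=
  (degreeOf_sub_le _ _ _).trans (by rw [degreeOf_X]; omega)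

lemma degreeOf_prod_X_sub_le {ι : Type*} (j : σ) (s : Finset ι) (a : ι → σ)
    (q : ι → MvPolynomial σ R) :
    degreeOf j (∏ t ∈ s, (X (a t) - q t)) ≤
      ∑ t ∈ s, ((if j = a t then 1 else 0) + degreeOf j (q t)) :=
  (degreeOf_prod_le _ _ _).trans (Finset.sum_le_sum fun _ _ => degreeOf_X_sub_le _ _ _)

end DegreeOf

section Roots

variable {σ R : Type*} [CommRing R] [IsDomain R]

lemma card_add_card_le_degreeOf {F : MvPolynomial σ R} (hF : F ≠ 0) (j : σ) {S T : Finset R}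
    (hST : S ⊆ T) (hT : ∀ t ∈ T, X j - C t ∣ F) (hS : ∀ t ∈ S, (X j - C t) ^ 2 ∣ F) :
    T.card + S.card ≤ degreeOf j F := by
  let φ := (renameEquiv R (Equiv.optionSubtypeNe j).symm).trans (optionEquivLeft R {k // k ≠ j})
  have hφ (t : R) : φ (X j - C t) = Polynomial.X - Polynomial.C (C t) := by
    simp only [φ, map_sub, AlgEquiv.trans_apply, renameEquiv_apply, rename_X, rename_C,
      Equiv.optionSubtypeNe_symm_self, optionEquivLeft_X_none, optionEquivLeft_C]
  rw [degreeOf_eq_natDegree]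
  refine Polynomial.card_add_card_le_natDegree (c := C) ((map_ne_zero_iff φ φ.injective).mpr hF)
    (C_injective _ R) hST (fun t ht => ?_) (fun t ht => ?_)
  · simpa [hφ] using map_dvd φ (hT t ht)
  · simpa [hφ] using map_dvd φ (hS t ht)

lemma card_filter_X_sub_C_dvd_le_degreeOf [Fintype R] {F : MvPolynomial σ R} (hF : F ≠ 0)
    (j : σ) :
    (Finset.univ.filter fun b => X j - C b ∣ F).card ≤ degreeOf j F := by
  simpa using card_add_card_le_degreeOf hF j
    (Finset.empty_subset _) (fun t ht => (Finset.mem_filter.mp ht).2) (by simp)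

end Roots

end MvPolynomial

lemma Finset.exists_notMem_of_card_add_sum_card_lt {K ι : Type*} [Fintype K] (A : Finset K)
    (B : Finset ι) (S : ι → Finset K) (h : A.card + ∑ j ∈ B, (S j).card < Fintype.card K) :
    ∃ β, β ∉ A ∧ ∀ j ∈ B, β ∉ S j := by
  obtain ⟨β, -, hβ⟩ := Finset.exists_mem_notMem_of_card_lt_card (s := A ∪ B.biUnion S)
    (t := Finset.univ) (Finset.card_univ (α := K) ▸ (Finset.card_union_le _ _).trans_lt
      ((add_le_add le_rfl Finset.card_biUnion_le).trans_lt h))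
  simp only [Finset.mem_union, Finset.mem_biUnion, not_or, not_exists, not_and] at hβ
  exact ⟨β, hβ.1, hβ.2⟩

section FermatReduction

variable {p : ℕ}

lemma fermatExp_le_self (p k : ℕ) : fermatExp p k ≤ k := by
  unfold fermatExp
  split_ifs
  · omega
  · have := Nat.mod_le (k - 1) (p - 1); omega

lemma fermatExp_le_sub_one (hp : 1 < p) (k : ℕ) : fermatExp p k ≤ p - 1 := by
  unfold fermatExp
  split_ifs
  · omega
  · have := Nat.mod_lt (k - 1) (show 0 < p - 1 by omega); omega

lemma pow_fermatExp [Fact p.Prime] (x : ZMod p) (k : ℕ) : x ^ fermatExp p k = x ^ k := by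
  unfold fermatExp
  split_ifs with hk
  · rw [hk]
  rcases eq_or_ne x 0 with rfl | hx
  · rw [zero_pow (by omega), zero_pow hk]
  · obtain ⟨k, rfl⟩ := Nat.exists_eq_add_one_of_ne_zero hk
    rw [add_tsub_cancel_right]
    conv_rhs => rw [← Nat.mod_add_div k (p - 1)]
    rw [pow_succ, pow_succ, pow_add, pow_mul, ZMod.pow_card_sub_one_eq_one hx, one_pow, mul_one]

variable {σ : Type*}

lemma exists_mem_support_of_mem_support_fermatReduce {F : MvPolynomial σ (ZMod p)}
    {s : σ →₀ ℕ} (hs : s ∈ (fermatReduce p F).support) :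
    ∃ d ∈ F.support, s = d.mapRange (fermatExp p) (fermatExp_zero p) := by
  obtain ⟨d, hd, rfl⟩ := exists_eq_of_mem_support_sum_monomial hs
  exact ⟨d, hd, rfl⟩

lemma degreeOf_fermatReduce_le (k : σ) (F : MvPolynomial σ (ZMod p)) :
    degreeOf k (fermatReduce p F) ≤ degreeOf k F := by
  refine degreeOf_le_iff.mpr fun s hs => ?_
  obtain ⟨d, hd, rfl⟩ := exists_mem_support_of_mem_support_fermatReduce hs
  exact (fermatExp_le_self p _).trans (monomial_le_degreeOf k hd)

lemma fermatReduce_mem_restrictDegree (hp : 1 < p) (F : MvPolynomial σ (ZMod p)) :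
    fermatReduce p F ∈ restrictDegree σ (ZMod p) (p - 1) := by
  refine (mem_restrictDegree _ _ _).mpr fun s hs k => ?_
  obtain ⟨d, -, rfl⟩ := exists_mem_support_of_mem_support_fermatReduce hs
  exact fermatExp_le_sub_one hp _

lemma eval_fermatReduce [Fintype σ] [Fact p.Prime] (x : σ → ZMod p)
    (F : MvPolynomial σ (ZMod p)) : eval x (fermatReduce p F) = eval x F :=
  eval_sum_monomial_eq_eval x F _ fun _ _ => pow_fermatExp _ _

variable {m : ℕ}

lemma exists_mem_support_of_mem_support_fermatReduceExcept {j : Fin m}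
    {F : MvPolynomial (Fin m) (ZMod p)} {s : Fin m →₀ ℕ}
    (hs : s ∈ (fermatReduceExcept p j F).support) :
    ∃ d ∈ F.support, s j = d j ∧ ∀ k ≠ j, s k = fermatExp p (d k) := by
  obtain ⟨d, hd, rfl⟩ := exists_eq_of_mem_support_sum_monomial hs
  refine ⟨d, hd, by simp [fermatExp_zero], fun k hk => by simp [hk]⟩

lemma degreeOf_fermatReduceExcept_le (j : Fin m) (F : MvPolynomial (Fin m) (ZMod p)) :
    degreeOf j (fermatReduceExcept p j F) ≤ degreeOf j F := by
  refine degreeOf_le_iff.mpr fun s hs => ?_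
  obtain ⟨d, hd, hsj, -⟩ := exists_mem_support_of_mem_support_fermatReduceExcept hs
  exact hsj ▸ monomial_le_degreeOf j hd

lemma le_of_mem_support_fermatReduceExcept (hp : 1 < p) {j : Fin m}
    {F : MvPolynomial (Fin m) (ZMod p)} {s : Fin m →₀ ℕ}
    (hs : s ∈ (fermatReduceExcept p j F).support) {k : Fin m} (hk : k ≠ j) : s k ≤ p - 1 := by
  obtain ⟨d, -, -, hs⟩ := exists_mem_support_of_mem_support_fermatReduceExcept hs
  exact hs k hk ▸ fermatExp_le_sub_one hp _

lemma eval_fermatReduceExcept [Fact p.Prime] (j : Fin m) (x : Fin m → ZMod p)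
    (F : MvPolynomial (Fin m) (ZMod p)) : eval x (fermatReduceExcept p j F) = eval x F := by
  refine eval_sum_monomial_eq_eval x F _ fun d k => ?_
  rcases eq_or_ne k j with rfl | hk
  · simp [fermatExp_zero]
  · simp [hk, pow_fermatExp]

end FermatReduction

section CoeffAt

variable {m p : ℕ}

lemma eval_coeffAt {j : Fin m} {d0 : Fin m →₀ ℕ} (hd0 : d0 j = 0)
    (F : MvPolynomial (Fin m) (ZMod p)) (b : ZMod p) :
    (coeffAt j d0 F).eval b = (substVar j b F).coeff d0 := by
  rw [coeffAt, Polynomial.eval_finsetSum, substVar_eq_sum, coeff_sum, Finset.sum_filter]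
  refine Finset.sum_congr rfl fun d _ => ?_
  rw [Polynomial.eval_monomial, coeff_monomial]
  congr 1
  refine propext ⟨fun h => ?_, fun h k hk => by rw [← h, Finsupp.erase_ne hk]⟩
  ext k
  rcases eq_or_ne k j with rfl | hk
  · simp [hd0]
  · simp [Finsupp.erase_ne hk, h k hk]

lemma natDegree_coeffAt_le (j : Fin m) (d0 : Fin m →₀ ℕ) (F : MvPolynomial (Fin m) (ZMod p)) :
    (coeffAt j d0 F).natDegree ≤ degreeOf j F :=
  Polynomial.natDegree_sum_le_of_forall_le _ _ fun _ hd =>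
    (Polynomial.natDegree_monomial_le _).trans
      (monomial_le_degreeOf j (Finset.mem_filter.mp hd).1)

end CoeffAt

section VanishingOffHyperplane

variable {p : ℕ} [Fact p.Prime]

lemma X_sub_C_dvd_fermatReduce {σ : Type} [Fintype σ] {F : MvPolynomial σ (ZMod p)} {j : σ}
    {b : ZMod p} (hF : ∀ x, x j = b → eval x F = 0) : X j - C b ∣ fermatReduce p F := by
  refine (X_sub_C_dvd_iff_substVar_eq_zero _ _ _).mpr
    (substVar_eq_zero_of_eval_eq_zero (fun d hd k _ => ?_) fun x hx => ?_)
  · rw [ZMod.card]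
    exact (mem_restrictDegree _ _ _).mp
      (fermatReduce_mem_restrictDegree (Fact.out : p.Prime).one_lt F) d hd k
  · rw [eval_fermatReduce]
    exact hF x hx

lemma X_sub_C_dvd_coeffAt_fermatReduceExcept {m : ℕ} {F : MvPolynomial (Fin m) (ZMod p)}
    {j : Fin m} {d0 : Fin m →₀ ℕ} (hd0 : d0 j = 0) {b : ZMod p}
    (hF : ∀ x, x j = b → eval x F = 0) :
    Polynomial.X - Polynomial.C b ∣ coeffAt j d0 (fermatReduceExcept p j F) := by
  rw [Polynomial.dvd_iff_isRoot, Polynomial.IsRoot, eval_coeffAt hd0,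
    substVar_eq_zero_of_eval_eq_zero (fun d hd k hk => ?_) fun x hx => ?_, coeff_zero]
  · rw [ZMod.card]
    exact le_of_mem_support_fermatReduceExcept (Fact.out : p.Prime).one_lt hd hk
  · rw [eval_fermatReduceExcept]
    exact hF x hx

lemma card_filter_sq_dvd_coeffAt_fermatReduceExcept_add_le {m : ℕ}
    {F : MvPolynomial (Fin m) (ZMod p)} {j : Fin m} {d0 : Fin m →₀ ℕ} (hd0 : d0 j = 0)
    {α : ZMod p} (hF : ∀ x, x j ≠ α → eval x F = 0)
    (hJ : coeffAt j d0 (fermatReduceExcept p j F) ≠ 0) :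
    (Finset.univ.filter fun b => b ≠ α ∧
        (Polynomial.X - Polynomial.C b) ^ 2 ∣ coeffAt j d0 (fermatReduceExcept p j F)).card +
      (p - 1) ≤ degreeOf j F := by
  set J := coeffAt j d0 (fermatReduceExcept p j F)
  have hcard := Polynomial.card_add_card_le_natDegree hJ Function.injective_id
    (T := Finset.univ.erase α)
    (S := Finset.univ.filter fun b => b ≠ α ∧ (Polynomial.X - Polynomial.C b) ^ 2 ∣ J)
    (fun b hb => by simpa using (Finset.mem_filter.mp hb).2.1)
    (fun t ht => X_sub_C_dvd_coeffAt_fermatReduceExcept hd0 fun x hx =>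
      hF x (hx ▸ Finset.ne_of_mem_erase ht))
    (fun t ht => (Finset.mem_filter.mp ht).2.2)
  rw [Finset.card_erase_of_mem (Finset.mem_univ _), Finset.card_univ, ZMod.card] at hcard
  exact add_comm (p - 1) _ ▸ hcard.trans
    ((natDegree_coeffAt_le j d0 _).trans (degreeOf_fermatReduceExcept_le j F))

variable {σ : Type} [Fintype σ] {F : MvPolynomial σ (ZMod p)} {j : σ} {α : ZMod p}

lemma not_X_sub_C_sq_dvd_fermatReduce (hF0 : fermatReduce p F ≠ 0)
    (hF : ∀ x, x j ≠ α → eval x F = 0) {b : ZMod p} (hb : b ≠ α) :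
    ¬ (X j - C b) ^ 2 ∣ fermatReduce p F := by
  intro hsq
  have hcard := card_add_card_le_degreeOf hF0 j (T := Finset.univ.erase α) (S := {b})
    (by simpa using hb)
    (fun t ht => X_sub_C_dvd_fermatReduce fun x hx => hF x (hx ▸ Finset.ne_of_mem_erase ht))
    (by simpa using hsq)
  have hdeg : degreeOf j (fermatReduce p F) ≤ p - 1 := degreeOf_le_iff.mpr fun d hd =>
    (mem_restrictDegree _ _ _).mp
      (fermatReduce_mem_restrictDegree (Fact.out : p.Prime).one_lt F) d hd j
  rw [Finset.card_erase_of_mem (Finset.mem_univ _), Finset.card_univ, ZMod.card,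
    Finset.card_singleton] at hcard
  omega

end VanishingOffHyperplane

section GraphPolynomials

variable {n m Δ p : ℕ} [Fact p.Prime] (ed : Fin m → Sym2 (Fin n))

lemma degreeOf_Ppoly_le (k : Fin m) : degreeOf (Sum.inr k) (Ppoly n m Δ p ed) ≤ 2 := by
  have hfactor (v : Fin n) :
      degreeOf (Sum.inr k)
        ((∏ w ∈ laterNbrs ed v, (X (Sum.inl v) - X (Sum.inl w))) *
          (∏ k' ∈ incidentE ed v, (X (Sum.inl v) - X (Sum.inr k'))) *
          (∏ l ∈ Finset.Icc (Δ + 2) p, (X (Sum.inl v) - C (l : ZMod p)))) ≤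
        if v ∈ ed k then 1 else 0 := by
    refine (degreeOf_mul_le _ _ _).trans ?_
    refine (add_le_add ((degreeOf_mul_le _ _ _).trans (add_le_add
      (degreeOf_prod_X_sub_le _ _ _ _) (degreeOf_prod_X_sub_le _ _ _ _)))
      (degreeOf_prod_X_sub_le _ _ _ _)).trans ?_
    simp only [degreeOf_X, degreeOf_C]
    simp [incidentE]
  calc degreeOf (Sum.inr k) (Ppoly n m Δ p ed)
      ≤ ∑ v, if v ∈ ed k then 1 else 0 :=
        (degreeOf_prod_le _ _ _).trans (Finset.sum_le_sum fun v _ => hfactor v)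
    _ = (ed k).toFinset.card := by
        rw [Finset.sum_boole]
        congr 2
        ext v
        simp
    _ ≤ 2 := by
        rw [Sym2.card_toFinset]
        split_ifs <;> omega

lemma degreeOf_vCoeff_le (F : MvPolynomial (Fin n ⊕ Fin m) (ZMod p)) (d : Fin n →₀ ℕ)
    (k : Fin m) : degreeOf k (vCoeff F d) ≤ degreeOf (Sum.inr k) F := by
  refine degreeOf_le_iff.mpr fun e he => ?_
  rw [vCoeff, mem_support_iff, coeff_coeff_sumAlgEquiv, ← mem_support_iff] at he
  simpa using monomial_le_degreeOf (Sum.inr k) he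

lemma degreeOf_vCoeff_fermatReduce_Ppoly_le (d : Fin n →₀ ℕ) (k : Fin m) :
    degreeOf k (vCoeff (fermatReduce p (Ppoly n m Δ p ed)) d) ≤ 2 :=
  (degreeOf_vCoeff_le _ d k).trans
    ((degreeOf_fermatReduce_le _ _).trans (degreeOf_Ppoly_le ed k))

lemma degreeOf_Epoly_le (α : ZMod p) (j k : Fin m) :
    degreeOf j (Epoly Δ p ed α k) ≤ if k = j then (m - 1) + (p - 1) else 1 := by
  refine (degreeOf_mul_le _ _ _).trans ((add_le_add (degreeOf_prod_X_sub_le _ _ _ _)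
    (degreeOf_prod_X_sub_le _ _ _ _)).trans ?_)
  rcases eq_or_ne k j with rfl | hkj
  · have hadj : (laterAdjE ed k).card ≤ m - 1 := by
      simpa using Finset.card_le_card (s := laterAdjE ed k) (t := Finset.univ.erase k)
        fun l hl => by simp_all [laterAdjE]
    have hcol : (Finset.univ \ colorSet Δ p α).card ≤ p - 1 := by
      rw [Finset.card_univ_sdiff, ZMod.card]
      have : 0 < (colorSet Δ p α).card := Finset.card_pos.mpr ⟨α, Finset.mem_insert_self _ _⟩
      omega
    have hself : k ∉ laterAdjE ed k := by simp [laterAdjE]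
    simp only [degreeOf_X, degreeOf_C, ↓reduceIte, add_zero, Finset.sum_add_distrib,
      Finset.sum_const, smul_eq_mul, mul_one, Finset.sum_ite_eq, if_neg hself]
    omega
  · simp only [degreeOf_X, degreeOf_C, if_neg hkj.symm, if_neg hkj, zero_add, add_zero,
      Finset.sum_const_zero, Finset.sum_ite_eq]
    split_ifs <;> simp

lemma degreeOf_prod_Epoly_le (α : ZMod p) (j : Fin m) (s : Finset (Fin m)) :
    degreeOf j (∏ k ∈ s, Epoly Δ p ed α k) ≤
      (if j ∈ s then (m - 1) + (p - 1) else 0) + s.card :=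
  calc degreeOf j (∏ k ∈ s, Epoly Δ p ed α k)
      ≤ ∑ k ∈ s, ((if k = j then (m - 1) + (p - 1) else 0) + 1) :=
        (degreeOf_prod_le _ _ _).trans (Finset.sum_le_sum fun k _ =>
          (degreeOf_Epoly_le ed α j k).trans (by split_ifs <;> omega))
    _ = (if j ∈ s then (m - 1) + (p - 1) else 0) + s.card := by
        rw [Finset.sum_add_distrib, Finset.sum_ite_eq', Finset.card_eq_sum_ones]

lemma degreeOf_Qpoly_mul_prod_le (α : ZMod p) {CP : MvPolynomial (Fin m) (ZMod p)} {j : Fin m}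
    (hCP : degreeOf j CP ≤ 2) {M1 : Finset (Fin m)} (hj : j ∉ M1) (i : ℕ) :
    degreeOf j (Qpoly Δ p ed α CP i * ∏ k ∈ M1, (X k - C α)) ≤
      2 + ((if (j : ℕ) < i then (m - 1) + (p - 1) else 0) + min m i) := by
  have hM1 : degreeOf j (∏ k ∈ M1, (X k - C α)) = 0 := by
    refine Nat.eq_zero_of_le_zero ((degreeOf_prod_X_sub_le _ _ _ _).trans ?_)
    simp [degreeOf_C, hj]
  refine (degreeOf_mul_le _ _ _).trans ?_
  rw [hM1, add_zero, Qpoly]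
  refine (degreeOf_mul_le _ _ _).trans
    (add_le_add hCP ((degreeOf_prod_Epoly_le ed α j _).trans ?_))
  simp [Fin.card_filter_val_lt]

end GraphPolynomials

lemma exists_color_of_degreeOf_le {m p : ℕ} [Fact p.Prime] {G : MvPolynomial (Fin m) (ZMod p)}
    {α : ZMod p} {K0 : Finset (ZMod p)} (hα : α ∈ K0) {i : Fin m} {M2 : Finset (Fin m)}
    {d0 : Fin m → Fin m →₀ ℕ} {D E : ℕ} (hG : fermatReduce p G ≠ 0)
    (hvan : ∀ j ∈ M2, ∀ x, x j ≠ α → eval x G = 0)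
    (hd0 : ∀ j ∈ insert i M2, d0 j j = 0)
    (hJ : ∀ j ∈ insert i M2, coeffAt j (d0 j) (fermatReduceExcept p j G) ≠ 0)
    (hdeg : ∀ j ∈ M2, degreeOf j G ≤ (p - 1) + D) (hdegi : degreeOf i G ≤ E)
    (hcard : K0.card + 2 * E + M2.card * D < p) :
    ∃ β : ZMod p, β ∉ K0 ∧
      (∀ j ∈ M2,
        (Polynomial.X - Polynomial.C β) ∣ coeffAt j (d0 j) (fermatReduceExcept p j G) ∧
        ¬ (Polynomial.X - Polynomial.C β) ^ 2 ∣ coeffAt j (d0 j) (fermatReduceExcept p j G)) ∧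
      (∀ j ∈ M2,
        (X j - C β) ∣ fermatReduce p G ∧ ¬ (X j - C β) ^ 2 ∣ fermatReduce p G) ∧
      ¬ (Polynomial.X - Polynomial.C β) ∣ coeffAt i (d0 i) (fermatReduceExcept p i G) ∧
      ¬ (X i - C β) ∣ fermatReduce p G := by
  have hi : i ∈ insert i M2 := Finset.mem_insert_self i M2
  have hmem {j} (hj : j ∈ M2) : j ∈ insert i M2 := Finset.mem_insert_of_mem hj
  obtain ⟨β, hβA, hβS⟩ := Finset.exists_notMem_of_card_add_sum_card_lt
    (K0 ∪ (Finset.univ.filter fun β => Polynomial.X - Polynomial.C β ∣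
        coeffAt i (d0 i) (fermatReduceExcept p i G)) ∪
      (Finset.univ.filter fun β => X i - C β ∣ fermatReduce p G)) M2
    (fun j => Finset.univ.filter fun β => β ≠ α ∧
      (Polynomial.X - Polynomial.C β) ^ 2 ∣ coeffAt j (d0 j) (fermatReduceExcept p j G)) (by
    have hJi := (Polynomial.card_filter_X_sub_C_dvd_le_natDegree (hJ i hi)).trans
      ((natDegree_coeffAt_le _ _ _).trans ((degreeOf_fermatReduceExcept_le _ _).trans hdegi))
    have hGi := (card_filter_X_sub_C_dvd_le_degreeOf hG i).trans
      ((degreeOf_fermatReduce_le _ _).trans hdegi)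
    have hS (j) (hj : j ∈ M2) := (card_filter_sq_dvd_coeffAt_fermatReduceExcept_add_le
      (hd0 j (hmem hj)) (hvan j hj) (hJ j (hmem hj))).trans (hdeg j hj)
    rw [ZMod.card]
    calc _ ≤ K0.card + E + E + M2.card * D :=
          add_le_add ((Finset.card_union_le _ _).trans (add_le_add
            ((Finset.card_union_le _ _).trans (add_le_add le_rfl hJi)) hGi))
            (Finset.sum_le_card_nsmul _ _ _ fun j hj => by have := hS j hj; omega)
      _ < p := by omega)
  simp only [Finset.mem_union, not_or] at hβA
  have hβα : β ≠ α := fun h => hβA.1.1 (h ▸ hα)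
  refine ⟨β, hβA.1.1, fun j hj => ⟨?_, ?_⟩, fun j hj => ⟨?_, ?_⟩, ?_, ?_⟩
  · exact X_sub_C_dvd_coeffAt_fermatReduceExcept (hd0 j (hmem hj))
      fun x hx => hvan j hj x (hx ▸ hβα)
  · exact fun h => hβS j hj (Finset.mem_filter.mpr ⟨Finset.mem_univ _, hβα, h⟩)
  · exact X_sub_C_dvd_fermatReduce fun x hx => hvan j hj x (hx ▸ hβα)
  · exact not_X_sub_C_sq_dvd_fermatReduce hG (hvan j hj) hβα
  · exact fun h => hβA.1.2 (Finset.mem_filter.mpr ⟨Finset.mem_univ _, h⟩)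
  · exact fun h => hβA.2 (Finset.mem_filter.mpr ⟨Finset.mem_univ _, h⟩)

lemma excluded_count_lt {m Δ p i c : ℕ} (hΔ : 0 < Δ) (hi : 0 < i) (hc : c ≤ i) (him : i < m)
    (hp : m ^ 2 * (2 * Δ + 2) ≤ p) : (Δ + 3) + 2 * (2 + i) + c * (m + 1 + i) < p := by
  have h1 : c * (m + 1 + i) ≤ (m - 1) * (2 * m) := Nat.mul_le_mul (by omega) (by omega)
  have h2 : 4 * Δ ≤ m ^ 2 * Δ := Nat.mul_le_mul_right _ (by nlinarith)
  have h3 : (m - 1) * (2 * m) + 2 * m = 2 * m ^ 2 := by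
    obtain ⟨q, rfl⟩ : ∃ q, m = q + 1 := ⟨m - 1, by omega⟩
    simp only [Nat.add_sub_cancel]
    ring
  nlinarith

theorem statement6_general (n m Δ p : ℕ) [Fact p.Prime]
    (hp : m ^ 2 * (2 * Δ + 2) ≤ p)
    (ed : Fin m → Sym2 (Fin n))
    (hΔ : ∀ i, (incidentE ed i).card ≤ Δ)
    (d : Fin n →₀ ℕ) (CP : MvPolynomial (Fin m) (ZMod p))
    (hCP : CP = vCoeff (fermatReduce p (Ppoly n m Δ p ed)) d)
    (α : ZMod p)
    (i : Fin m) (hi : 1 ≤ (i : ℕ))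
    (M1 : Finset (Fin m)) (hM1 : ∀ k ∈ M1, k < i)
    (Gp : MvPolynomial (Fin m) (ZMod p))
    (hGp : Gp = Qpoly Δ p ed α CP (i : ℕ) * ∏ k ∈ M1, (X k - C α))
    (M2 : Finset (Fin m)) (hM2 : M2 = (Finset.univ.filter fun k : Fin m => k < i) \ M1)
    (hG : fermatReduce p Gp ≠ 0)
    (hH : ∀ j ∈ M2, fermatReduce p (fermatReduce p Gp * (X j - C α)) = 0)
    (d0 : Fin m → (Fin m →₀ ℕ))
    (hd0 : ∀ j ∈ insert i M2, (d0 j) j = 0)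
    (hJ : ∀ j ∈ insert i M2, coeffAt j (d0 j) (fermatReduceExcept p j Gp) ≠ 0) :
    ∃ β : ZMod p,
      β ∉ insert α ((Finset.range (Δ + 2)).image fun l : ℕ => (l : ZMod p)) ∧
      (∀ j ∈ M2,
        (Polynomial.X - Polynomial.C β) ∣ coeffAt j (d0 j) (fermatReduceExcept p j Gp) ∧
        ¬ (Polynomial.X - Polynomial.C β) ^ 2 ∣ coeffAt j (d0 j) (fermatReduceExcept p j Gp)) ∧
      (∀ j ∈ M2,
        (X j - C β) ∣ fermatReduce p Gp ∧ ¬ (X j - C β) ^ 2 ∣ fermatReduce p Gp) ∧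
      ¬ (Polynomial.X - Polynomial.C β) ∣ coeffAt i (d0 i) (fermatReduceExcept p i Gp) ∧
      ¬ (X i - C β) ∣ fermatReduce p Gp := by
  have hvan : ∀ j ∈ M2, ∀ x, x j ≠ α → eval x Gp = 0 := fun j hj x hx => by
    simpa [eval_fermatReduce, sub_eq_zero, hx] using congrArg (eval x) (hH j hj)
  have hM2i : ∀ j ∈ M2, j < i ∧ j ∉ M1 := by simp [hM2]
  have hCP2 (j : Fin m) : degreeOf j CP ≤ 2 := hCP ▸ degreeOf_vCoeff_fermatReduce_Ppoly_le ed d j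
  have hdeg : ∀ j ∈ M2, degreeOf j Gp ≤ (p - 1) + (m + 1 + i) := fun j hj => hGp ▸
    (degreeOf_Qpoly_mul_prod_le ed α (hCP2 j) (hM2i j hj).2 i).trans
      (by simp [Fin.lt_def.mp (hM2i j hj).1, i.isLt.le]; omega)
  have hdegi : degreeOf i Gp ≤ 2 + i := hGp ▸
    (degreeOf_Qpoly_mul_prod_le ed α (hCP2 i) (fun h => lt_irrefl i (hM1 i h)) i).trans
      (by simp [i.isLt.le])
  have hΔ1 : 0 < Δ := (Finset.card_pos.mpr ⟨i, by simp [incidentE, Sym2.out_fst_mem]⟩).trans_le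
    (hΔ (ed i).out.1)
  have hK : (insert α ((Finset.range (Δ + 2)).image fun l : ℕ => (l : ZMod p))).card ≤ Δ + 3 :=
    (Finset.card_insert_le _ _).trans
      (Nat.add_le_add_right (Finset.card_image_le.trans (Finset.card_range _).le) 1)
  have hM2card : M2.card ≤ i := by
    rw [← Fin.card_Iio, ← Finset.filter_gt_eq_Iio, hM2]
    exact Finset.card_le_card Finset.sdiff_subset
  exact exists_color_of_degreeOf_le (Finset.mem_insert_self _ _) hG hvan hd0 hJ hdeg hdegi
    ((Nat.add_le_add_right (Nat.add_le_add_right hK _) _).trans_lt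
      (excluded_count_lt hΔ1 hi hM2card i.isLt hp))

/-- Claim 3.9 of the paper. In the situation of Hypothesis 3.5 (with
`α = α_{i-1}`), with `G`, `M_1`, `M_2` as in the context and, for each `e_j ∈ M_2 ∪ {e_i}`,
a chosen monomial (exponent vector `d0 j`, not involving `e_j`) whose coefficient
`J(e_j) = coeffAt j (d0 j) (fermatReduceExcept p j G)` is nonzero, there exists
`β_i ∈ Z_p ∖ {0, 1, …, Δ+1, α_{i-1}}` such that: for each `e_j ∈ M_2`, `(e_j - β_i)` divides
`J(e_j)` but `(e_j - β_i)²` does not; for each `e_j ∈ M_2`, `(e_j - β_i)` divides `G'` but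
`(e_j - β_i)²` does not; and `(e_i - β_i)` divides neither `J(e_i)` nor `G'`. -/
theorem statement6 (n m Δ p : ℕ) [Fact p.Prime]
    (hm : 1 ≤ m) (hp : m ^ 2 * (2 * Δ + 2) ≤ p)
    (ed : Fin m → Sym2 (Fin n)) (hinj : Function.Injective ed)
    (hsimple : ∀ k, ¬ (ed k).IsDiag)
    (hΔ : ∀ i, (incidentE ed i).card ≤ Δ)
    (hΔmax : ∃ i, (incidentE ed i).card = Δ)
    (d : Fin n →₀ ℕ) (CP : MvPolynomial (Fin m) (ZMod p))
    (hCP : CP = vCoeff (fermatReduce p (Ppoly n m Δ p ed)) d) (hCP0 : CP ≠ 0)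
    (α : ZMod p) (hα : α ∉ (Finset.range (Δ + 2)).image fun l : ℕ => (l : ZMod p))
    (i : Fin m) (hi : 1 ≤ (i : ℕ))
    (hQprev : fermatReduce p (Qpoly Δ p ed α CP (i : ℕ)) ≠ 0)
    (hQi : fermatReduce p (Qpoly Δ p ed α CP ((i : ℕ) + 1)) = 0)
    (M1 : Finset (Fin m)) (hM1 : ∀ k ∈ M1, k < i)
    (Gp : MvPolynomial (Fin m) (ZMod p))
    (hGp : Gp = Qpoly Δ p ed α CP (i : ℕ) * ∏ k ∈ M1, (X k - C α))
    (M2 : Finset (Fin m)) (hM2 : M2 = (Finset.univ.filter fun k : Fin m => k < i) \ M1)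
    (hG : fermatReduce p Gp ≠ 0)
    (hH : ∀ j ∈ M2, fermatReduce p (fermatReduce p Gp * (X j - C α)) = 0)
    (d0 : Fin m → (Fin m →₀ ℕ))
    (hd0 : ∀ j ∈ insert i M2, (d0 j) j = 0)
    (hJ : ∀ j ∈ insert i M2, coeffAt j (d0 j) (fermatReduceExcept p j Gp) ≠ 0) :
    ∃ β : ZMod p,
      β ∉ insert α ((Finset.range (Δ + 2)).image fun l : ℕ => (l : ZMod p)) ∧
      (∀ j ∈ M2,
        (Polynomial.X - Polynomial.C β) ∣ coeffAt j (d0 j) (fermatReduceExcept p j Gp) ∧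
        ¬ (Polynomial.X - Polynomial.C β) ^ 2 ∣ coeffAt j (d0 j) (fermatReduceExcept p j Gp)) ∧
      (∀ j ∈ M2,
        (X j - C β) ∣ fermatReduce p Gp ∧ ¬ (X j - C β) ^ 2 ∣ fermatReduce p Gp) ∧
      ¬ (Polynomial.X - Polynomial.C β) ∣ coeffAt i (d0 i) (fermatReduceExcept p i Gp) ∧
      ¬ (X i - C β) ∣ fermatReduce p Gp :=
  statement6_general n m Δ p hp ed hΔ d CP hCP α i hi M1 hM1 Gp hGp M2 hM2 hG hH d0 hd0 hJ

end
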